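/- arXiv:1603.00053 — 5 statements merged into one kernel-verified Lean document; each statement's English description precedes it below -/
import Mathlib

section
/- Let a, b > 0, let ℓ₁ : [−a,a] → ℝ and ℓ₂ : [−b,b] → ℝ be nondecreasing maps, and let φ : [−b,b] → [−a,a] be a nondecreasing map. Then for every ε > 0 there exist real numbers s, t with |s| ≤ ε and |t| ≤ ε such that φ({x ∈ [−b,b] : ℓ₂(x) + t = x}) ∩ {x ∈ [−a,a] : ℓ₁(x) + s = x} = ∅. -/
open Set

/-!
If the claim failed for some `ε`, every point `(s, t)` of the square `[-ε, ε]²` would be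
`(G y, F y)` for some `y ∈ [-b, b]`, where `F = id - ℓ₂` and `G = φ - ℓ₁ ∘ φ`. Both are
differences of nondecreasing functions, so their increments are dominated by those of the single
nondecreasing function `V = (id + ℓ₂) + (φ + ℓ₁ ∘ φ)`. Hence `y ↦ (G y, F y)` factors through `V`
by a `1`-Lipschitz map, and its image has Hausdorff dimension at most `1`, whereas the square
has dimension `2`.
-/

theorem dimH_image_le_of_edist_le {X Y Z : Type*} [EMetricSpace Y] [EMetricSpace Z]
    {f : X → Z} {V : X → Y} {s : Set X}
    (h : ∀ x ∈ s, ∀ y ∈ s, edist (f x) (f y) ≤ edist (V x) (V y)) :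
    dimH (f '' s) ≤ dimH (V '' s) := by
  rcases s.eq_empty_or_nonempty with rfl | ⟨x₀, -⟩
  · simp
  have : Nonempty X := ⟨x₀⟩
  -- `V x = V x'` forces `f x = f x'`, so `f` factors through `V`.
  obtain ⟨g, hg⟩ : ∃ g : Y → Z, EqOn (g ∘ V) f s := by
    refine ⟨f ∘ Function.invFunOn V s, fun x hx => ?_⟩
    have hV : ∃ x' ∈ s, V x' = V x := ⟨x, hx, rfl⟩
    apply edist_le_zero.1
    simpa [Function.invFunOn_eq hV] using h _ (Function.invFunOn_mem hV) x hx
  have hgLip : LipschitzOnWith 1 g (V '' s) := by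
    rintro _ ⟨x, hx, rfl⟩ _ ⟨y, hy, rfl⟩
    simpa [← hg hx, ← hg hy] using h x hx y hy
  rw [← hg.image_eq, image_comp]
  exact hgLip.dimH_image_le

theorem dimH_image_le_one_of_edist_le {X Z : Type*} [EMetricSpace Z]
    {f : X → Z} {V : X → ℝ} {s : Set X}
    (h : ∀ x ∈ s, ∀ y ∈ s, edist (f x) (f y) ≤ edist (V x) (V y)) :
    dimH (f '' s) ≤ 1 :=
  calc dimH (f '' s) ≤ dimH (V '' s) := dimH_image_le_of_edist_le h
    _ ≤ dimH (univ : Set ℝ) := dimH_mono (subset_univ _)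
    _ = 1 := by simp [Real.dimH_univ_eq_finrank]

section MonotoneOn

variable {α : Type*} [LinearOrder α] {p q : α → ℝ} {s : Set α} {x y : α}

theorem MonotoneOn.dist_sub_le_dist_add (hp : MonotoneOn p s) (hq : MonotoneOn q s)
    (hx : x ∈ s) (hy : y ∈ s) : dist (p x - q x) (p y - q y) ≤ dist (p x + q x) (p y + q y) := by
  wlog hxy : x ≤ y generalizing x y
  · rw [dist_comm, dist_comm (p x + q x)]
    exact this hy hx (le_of_not_ge hxy)
  have hpxy := hp hx hy hxy
  have hqxy := hq hx hy hxy
  rw [Real.dist_eq, Real.dist_eq, abs_of_nonpos (sub_nonpos.2 (add_le_add hpxy hqxy)), abs_le]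
  constructor <;> linarith

theorem MonotoneOn.dist_le_dist_add (hp : MonotoneOn p s) (hq : MonotoneOn q s)
    (hx : x ∈ s) (hy : y ∈ s) : dist (p x) (p y) ≤ dist (p x + q x) (p y + q y) := by
  wlog hxy : x ≤ y generalizing x y
  · rw [dist_comm, dist_comm (p x + q x)]
    exact this hy hx (le_of_not_ge hxy)
  have hpxy := hp hx hy hxy
  have hqxy := hq hx hy hxy
  rw [Real.dist_eq, Real.dist_eq, abs_of_nonpos (sub_nonpos.2 hpxy),
    abs_of_nonpos (sub_nonpos.2 (add_le_add hpxy hqxy))]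
  linarith

end MonotoneOn

theorem MonotoneOn.dimH_image_sub_prodMk_sub_le_one {α : Type*} [LinearOrder α]
    {p₁ q₁ p₂ q₂ : α → ℝ} {s : Set α} (hp₁ : MonotoneOn p₁ s) (hq₁ : MonotoneOn q₁ s)
    (hp₂ : MonotoneOn p₂ s) (hq₂ : MonotoneOn q₂ s) :
    dimH ((fun x => (p₁ x - q₁ x, p₂ x - q₂ x)) '' s) ≤ 1 := by
  refine dimH_image_le_one_of_edist_le
    (V := fun x => (p₁ x + q₁ x) + (p₂ x + q₂ x)) fun x hx y hy => ?_
  have hm₁ := hp₁.add hq₁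
  have hm₂ := hp₂.add hq₂
  rw [Prod.edist_eq, edist_dist, edist_dist, edist_dist, ← ENNReal.ofReal_max]
  refine ENNReal.ofReal_le_ofReal (max_le ?_ ?_)
  · exact (hp₁.dist_sub_le_dist_add hq₁ hx hy).trans (hm₁.dist_le_dist_add hm₂ hx hy)
  · refine (hp₂.dist_sub_le_dist_add hq₂ hx hy).trans ?_
    rw [add_comm (p₁ x + q₁ x), add_comm (p₁ y + q₁ y)]
    exact hm₂.dist_le_dist_add hm₁ hx hy

theorem stmt_0_general (a b : ℝ)
    (ℓ₁ ℓ₂ φ : ℝ → ℝ)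
    (hℓ₁ : MonotoneOn ℓ₁ (Icc (-a) a))
    (hℓ₂ : MonotoneOn ℓ₂ (Icc (-b) b))
    (hφ : MonotoneOn φ (Icc (-b) b))
    (hφmap : MapsTo φ (Icc (-b) b) (Icc (-a) a)) :
    ∀ ε > 0, ∃ s t : ℝ, |s| ≤ ε ∧ |t| ≤ ε ∧
      φ '' {x | x ∈ Icc (-b) b ∧ ℓ₂ x + t = x} ∩
        {x | x ∈ Icc (-a) a ∧ ℓ₁ x + s = x} = ∅ := by
  intro ε hε
  by_contra! hcover
  have hsquare : Metric.closedBall (0 : ℝ × ℝ) ε ⊆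
      (fun y => (φ y - ℓ₁ (φ y), y - ℓ₂ y)) '' Icc (-b) b := by
    rintro ⟨s, t⟩ hst
    rw [mem_closedBall_zero_iff, Prod.norm_def, max_le_iff, Real.norm_eq_abs,
      Real.norm_eq_abs] at hst
    obtain ⟨_, ⟨y, ⟨hy, hyt⟩, rfl⟩, -, hys⟩ := hcover s t hst.1 hst.2
    exact ⟨y, hy, Prod.ext (by linarith) (by linarith)⟩
  have hsquare_dim : dimH (Metric.closedBall (0 : ℝ × ℝ) ε) = 2 := by
    rw [Real.dimH_of_mem_nhds (Metric.closedBall_mem_nhds 0 hε)]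
    simp
  have hcurve_dim := MonotoneOn.dimH_image_sub_prodMk_sub_le_one hφ (hℓ₁.comp hφ hφmap)
    monotoneOn_id hℓ₂
  have := (dimH_mono hsquare).trans hcurve_dim
  rw [hsquare_dim] at this
  norm_num at this

/-- Proposition A.1: two nondecreasing interval maps admit arbitrarily small
translations whose fixed point sets are unrelated via a nondecreasing map φ. -/
theorem stmt_0 (a b : ℝ) (ha : 0 < a) (hb : 0 < b)
    (ℓ₁ ℓ₂ φ : ℝ → ℝ)
    (hℓ₁ : MonotoneOn ℓ₁ (Icc (-a) a))
    (hℓ₂ : MonotoneOn ℓ₂ (Icc (-b) b))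
    (hφ : MonotoneOn φ (Icc (-b) b))
    (hφmap : MapsTo φ (Icc (-b) b) (Icc (-a) a)) :
    ∀ ε > 0, ∃ s t : ℝ, |s| ≤ ε ∧ |t| ≤ ε ∧
      φ '' {x | x ∈ Icc (-b) b ∧ ℓ₂ x + t = x} ∩
        {x | x ∈ Icc (-a) a ∧ ℓ₁ x + s = x} = ∅ :=
  stmt_0_general a b ℓ₁ ℓ₂ φ hℓ₁ hℓ₂ hφ hφmap
end

section
/- Let f : [a,b] → ℝ have bounded variation on [a,b], let [a₁,b₁], …, [a_n,b_n] be finitely many subintervals of [a,b] whose open interiors (a_i,b_i) are pairwise disjoint, and suppose that the union of the images f([a₁,b₁]) ∪ … ∪ f([a_n,b_n]) contains an interval [c,d] with c ≤ d. Then ∑_{i=1}^{n} V(f;[a_i,b_i]) ≥ d − c. -/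
open Set MeasureTheory

/-!
A set of reals has Lebesgue measure at most its diameter, and the diameter of `f '' s` is at most
the variation of `f` on `s`. Hence each image `f '' [aᵢ, bᵢ]` has measure at most
`V(f; [aᵢ, bᵢ])`, and subadditivity of Lebesgue measure over the cover of `[c, d]` gives the bound.
-/

theorem eVariationOn.ediam_image_le {α E : Type*} [LinearOrder α] [PseudoEMetricSpace E]
    (f : α → E) (s : Set α) : Metric.ediam (f '' s) ≤ eVariationOn f s :=
  Metric.ediam_image_le_iff.2 fun _ hx _ hy => eVariationOn.edist_le f hx hy

theorem volume_image_le_eVariationOn {α : Type*} [LinearOrder α] (f : α → ℝ) (s : Set α) :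
    volume (f '' s) ≤ eVariationOn f s :=
  (Real.volume_le_diam _).trans (eVariationOn.ediam_image_le f s)

theorem stmt_2_general (f : ℝ → ℝ)
    (n : ℕ) (c' d' : Fin n → ℝ) (c d : ℝ)
    (hcover : Icc c d ⊆ ⋃ i, f '' Icc (c' i) (d' i)) :
    ENNReal.ofReal (d - c) ≤ ∑ i, eVariationOn f (Icc (c' i) (d' i)) :=
  calc ENNReal.ofReal (d - c) = volume (Icc c d) := Real.volume_Icc.symm
    _ ≤ volume (⋃ i, f '' Icc (c' i) (d' i)) := measure_mono hcover
    _ ≤ ∑ i, volume (f '' Icc (c' i) (d' i)) := measure_iUnion_fintype_le _ _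
    _ ≤ ∑ i, eVariationOn f (Icc (c' i) (d' i)) :=
      Finset.sum_le_sum fun _ _ => volume_image_le_eVariationOn f _

/-- Lemma A.2 (3): if the images of subintervals with pairwise disjoint interiors
cover an interval [c,d], the sum of the variations is at least d - c. -/
theorem stmt_2 (a b : ℝ) (f : ℝ → ℝ)
    (hf : BoundedVariationOn f (Icc a b))
    (n : ℕ) (c' d' : Fin n → ℝ) (c d : ℝ) (hcd : c ≤ d)
    (hsub : ∀ i, Icc (c' i) (d' i) ⊆ Icc a b)
    (hdisj : ∀ i j, i ≠ j → Ioo (c' i) (d' i) ∩ Ioo (c' j) (d' j) = ∅)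
    (hcover : Icc c d ⊆ ⋃ i, f '' Icc (c' i) (d' i)) :
    ENNReal.ofReal (d - c) ≤ ∑ i, eVariationOn f (Icc (c' i) (d' i)) :=
  stmt_2_general f n c' d' c d hcover
end

section
/- Let f : [a,b] → ℝ be a nondecreasing map. Then for every ε > 0 there exists δ > 0 such that for all x, y ∈ [a,b] with 0 < y − x < δ, either f(y) − f(x) < ε, or there exists z ∈ [x,y] with f₊(z) − f₋(z) ≥ ε/2 (i.e., f has a jump of size ε/2 between x and y). -/
/-!
Every point `z` of `[a, b]` has a neighbourhood `(u, v)` on which `f` stays within `ε / 4` of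
`f₋(z)` to the left of `z` and of `f₊(z)` to the right of it. Hence an increment `f y - f x` with
`x < y` inside `(u, v)` is below `ε / 4` unless `x ≤ z ≤ y`, and then it is below
`f₊(z) - f₋(z) + ε / 2`, which is less than `ε` unless `f` jumps by `ε / 2` at `z`. A Lebesgue
number `δ` of this open cover of the compact interval `[a, b]` does the job.
-/

open Set

/-- The left limit f₋(z) of a nondecreasing map f : [a,b] → ℝ:
f₋(z) = sup {f w : w ∈ [a,b], w < z} for z > a, and f₋(a) = f(a). -/
noncomputable def leftLimit (f : ℝ → ℝ) (a b z : ℝ) : ℝ :=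
  if z ≤ a then f a else sSup (f '' {w | w ∈ Set.Icc a b ∧ w < z})

/-- The right limit f₊(z) of a nondecreasing map f : [a,b] → ℝ:
f₊(z) = inf {f w : w ∈ [a,b], w > z} for z < b, and f₊(b) = f(b). -/
noncomputable def rightLimit (f : ℝ → ℝ) (a b z : ℝ) : ℝ :=
  if b ≤ z then f b else sInf (f '' {w | w ∈ Set.Icc a b ∧ z < w})

namespace MonotoneOn

variable {f : ℝ → ℝ} {a b x z : ℝ}

lemma image_Icc_sep_subset (hf : MonotoneOn f (Icc a b)) (p : ℝ → Prop) :
    f '' {w | w ∈ Icc a b ∧ p w} ⊆ Icc (f a) (f b) :=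
  (image_mono fun _ hw => hw.1).trans hf.image_Icc_subset

lemma le_leftLimit (hf : MonotoneOn f (Icc a b)) (hx : x ∈ Icc a b) (hxz : x < z) :
    f x ≤ leftLimit f a b z := by
  rw [leftLimit, if_neg (hx.1.trans_lt hxz).not_ge]
  exact le_csSup (bddAbove_Icc.mono (hf.image_Icc_sep_subset _)) ⟨x, ⟨hx, hxz⟩, rfl⟩

lemma rightLimit_le (hf : MonotoneOn f (Icc a b)) (hx : x ∈ Icc a b) (hzx : z < x) :
    rightLimit f a b z ≤ f x := by
  rw [rightLimit, if_neg (hzx.trans_le hx.2).not_ge]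
  exact csInf_le (bddBelow_Icc.mono (hf.image_Icc_sep_subset _)) ⟨x, ⟨hx, hzx⟩, rfl⟩

lemma exists_lt_forall_leftLimit_sub_lt (hf : MonotoneOn f (Icc a b)) (hz : z ∈ Icc a b)
    {η : ℝ} (hη : 0 < η) : ∃ u < z, ∀ x ∈ Icc a b, u < x → leftLimit f a b z - η < f x := by
  by_cases haz : a < z
  · have hne : (f '' {w | w ∈ Icc a b ∧ w < z}).Nonempty :=
      ⟨f a, a, ⟨left_mem_Icc.2 (hz.1.trans hz.2), haz⟩, rfl⟩
    obtain ⟨_, ⟨u, ⟨hu, huz⟩, rfl⟩, hlt⟩ := exists_lt_of_lt_csSup hne (sub_lt_self _ hη)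
    refine ⟨u, huz, fun x hx hux => ?_⟩
    rw [leftLimit, if_neg haz.not_ge]
    exact hlt.trans_le (hf hu hx hux.le)
  · refine ⟨z - 1, sub_one_lt z, fun x hx _ => ?_⟩
    rw [leftLimit, if_pos (not_lt.1 haz)]
    linarith [hf (left_mem_Icc.2 (hx.1.trans hx.2)) hx hx.1]

lemma exists_gt_forall_lt_rightLimit_add (hf : MonotoneOn f (Icc a b)) (hz : z ∈ Icc a b)
    {η : ℝ} (hη : 0 < η) : ∃ v > z, ∀ y ∈ Icc a b, y < v → f y < rightLimit f a b z + η := by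
  by_cases hzb : z < b
  · have hne : (f '' {w | w ∈ Icc a b ∧ z < w}).Nonempty :=
      ⟨f b, b, ⟨right_mem_Icc.2 (hz.1.trans hz.2), hzb⟩, rfl⟩
    obtain ⟨_, ⟨v, ⟨hv, hzv⟩, rfl⟩, hlt⟩ := exists_lt_of_csInf_lt hne (lt_add_of_pos_right _ hη)
    refine ⟨v, hzv, fun y hy hyv => ?_⟩
    rw [rightLimit, if_neg hzb.not_ge]
    exact (hf hy hv hyv.le).trans_lt hlt
  · refine ⟨z + 1, lt_add_one z, fun y hy _ => ?_⟩
    rw [rightLimit, if_pos (not_lt.1 hzb)]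
    linarith [hf hy (right_mem_Icc.2 (hy.1.trans hy.2)) hy.2]

lemma exists_Ioo_increment_lt_or_jump (hf : MonotoneOn f (Icc a b)) (hz : z ∈ Icc a b)
    {ε : ℝ} (hε : 0 < ε) :
    ∃ u < z, ∃ v > z, ∀ x ∈ Icc a b, ∀ y ∈ Icc a b, x ∈ Ioo u v → y ∈ Ioo u v → x < y →
      f y - f x < ε ∨ ∃ z' ∈ Icc x y, ε / 2 ≤ rightLimit f a b z' - leftLimit f a b z' := by
  obtain ⟨u, huz, hu⟩ := hf.exists_lt_forall_leftLimit_sub_lt hz (by positivity : 0 < ε / 4)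
  obtain ⟨v, hzv, hv⟩ := hf.exists_gt_forall_lt_rightLimit_add hz (by positivity : 0 < ε / 4)
  refine ⟨u, huz, v, hzv, fun x hx y hy hxU hyU hxy => ?_⟩
  have hfx := hu x hx hxU.1
  have hfy := hv y hy hyU.2
  rcases lt_or_ge y z with hyz | hzy
  · left
    linarith [hf.le_leftLimit hy hyz]
  rcases lt_or_ge z x with hzx | hxz
  · left
    linarith [hf.rightLimit_le hx hzx]
  by_cases hjump : ε / 2 ≤ rightLimit f a b z - leftLimit f a b z
  · exact Or.inr ⟨z, ⟨hxz, hzy⟩, hjump⟩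
  · left
    linarith

end MonotoneOn

theorem stmt_3_general (a b : ℝ) (f : ℝ → ℝ)
    (hf : MonotoneOn f (Icc a b)) :
    ∀ ε > 0, ∃ δ > 0, ∀ x ∈ Icc a b, ∀ y ∈ Icc a b,
      0 < y - x → y - x < δ →
      f y - f x < ε ∨ ∃ z ∈ Icc x y, ε / 2 ≤ rightLimit f a b z - leftLimit f a b z := by
  intro ε hε
  choose u hu v hv hincr using
    fun z : Icc a b => hf.exists_Ioo_increment_lt_or_jump z.2 hε
  have hcover : Icc a b ⊆ ⋃ z, Ioo (u z) (v z) := fun z hz =>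
    mem_iUnion.2 ⟨⟨z, hz⟩, hu ⟨z, hz⟩, hv ⟨z, hz⟩⟩
  obtain ⟨δ, hδ, hball⟩ :=
    lebesgue_number_lemma_of_metric isCompact_Icc (fun _ => isOpen_Ioo) hcover
  refine ⟨δ, hδ, fun x hx y hy hpos hlt => ?_⟩
  obtain ⟨z, hz⟩ := hball x hx
  have hyx : y ∈ Metric.ball x δ := by
    rwa [Metric.mem_ball, Real.dist_eq, abs_of_pos hpos]
  exact hincr z x hx y hy (hz (Metric.mem_ball_self hδ)) (hz hyx) (sub_pos.1 hpos)

/-- Lemma A.3 (Lemma l.aux): for a nondecreasing f on [a,b] and ε > 0 there is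
δ > 0 such that if 0 < y - x < δ then either f(y) - f(x) < ε or f has a jump
of size ε/2 in [x,y]. -/
theorem stmt_3 (a b : ℝ) (hab : a ≤ b) (f : ℝ → ℝ)
    (hf : MonotoneOn f (Icc a b)) :
    ∀ ε > 0, ∃ δ > 0, ∀ x ∈ Icc a b, ∀ y ∈ Icc a b,
      0 < y - x → y - x < δ →
      f y - f x < ε ∨ ∃ z ∈ Icc x y, ε / 2 ≤ rightLimit f a b z - leftLimit f a b z :=
  stmt_3_general a b f hf
end

section
/- Let a, b > 0, let ℓ₁ : [−a,a] → ℝ and φ : [−b,b] → [−a,a] be nondecreasing maps, and set g₁(x) = ℓ₁(x) − x. Then for any real numbers s₁ < s₂, the set closure(φ⁻¹(g₁⁻¹(s₁))) ∩ closure(φ⁻¹(g₁⁻¹(s₂))) contains at most finitely many points. -/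
/-!
The map `F = ℓ₁ ∘ φ + φ` is nondecreasing on `[-b, b]`, and between a point of the level set
`s₁` and a point of the level set `s₂` it changes by at least `s₂ - s₁`. Hence `F` increases by
`s₂ - s₁` across every point of the intersection of the two closures, and a bounded monotone
function can do so only finitely often.
-/

open Set

theorem Set.finite_of_forall_lt_not_lt {α : Type*} [LinearOrder α] {T : Set α}
    (h : ∀ p ∈ T, ∀ q ∈ T, ∀ r ∈ T, p < q → ¬q < r) : T.Finite := by
  by_contra hT
  obtain ⟨s, hsT, hs⟩ := Set.Infinite.exists_subset_card_eq hT 3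
  let e := s.orderEmbOfFin hs
  have he : ∀ i, e i ∈ T := fun i => hsT (s.orderEmbOfFin_mem hs i)
  exact h _ (he 0) _ (he 1) _ (he 2) (e.strictMono (by decide)) (e.strictMono (by decide))

theorem Set.finite_of_forall_lt_lt_add_le {α : Type*} [LinearOrder α] {T : Set α} {f : α → ℝ}
    {m M δ : ℝ} (hδ : 0 < δ) (hf : MapsTo f T (Icc m M))
    (h : ∀ p ∈ T, ∀ q ∈ T, ∀ r ∈ T, p < q → q < r → f p + δ ≤ f r) : T.Finite := by
  set c : α → ℤ := fun p => ⌊f p / δ⌋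
  have hc : MapsTo c T (Icc ⌊m / δ⌋ ⌊M / δ⌋) := fun p hp =>
    ⟨Int.floor_mono (by gcongr; exact (hf hp).1), Int.floor_mono (by gcongr; exact (hf hp).2)⟩
  have hfiber : ∀ k, {p ∈ T | c p = k}.Finite := fun k =>
    finite_of_forall_lt_not_lt fun p ⟨hp, hpk⟩ q ⟨hq, _⟩ r ⟨hr, hrk⟩ hpq hqr => by
      have hclose := Int.abs_sub_lt_one_of_floor_eq_floor (hrk.trans hpk.symm)
      rw [← sub_div, abs_div, abs_of_pos hδ, div_lt_one hδ] at hclose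
      linarith [h p hp q hq r hr hpq hqr, le_abs_self (f r - f p)]
  refine (((finite_Icc _ _).subset hc.image_subset).biUnion fun k _ => hfiber k).subset ?_
  exact fun p hp => mem_biUnion (mem_image_of_mem c hp) ⟨hp, rfl⟩

theorem MonotoneOn.add_abs_sub_le {s : Set ℝ} {F : ℝ → ℝ} (hF : MonotoneOn F s)
    {p x y r : ℝ} (hp : p ∈ s) (hx : x ∈ s) (hy : y ∈ s) (hr : r ∈ s)
    (hpx : p ≤ x) (hpy : p ≤ y) (hxr : x ≤ r) (hyr : y ≤ r) :
    F p + |F x - F y| ≤ F r := by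
  have := abs_sub_le_iff.2
    ⟨sub_le_sub (hF hx hr hxr) (hF hp hy hpy), sub_le_sub (hF hy hr hyr) (hF hp hx hpx)⟩
  linarith

theorem finite_closure_inter_closure_of_monotoneOn {F : ℝ → ℝ} {lo hi δ : ℝ} {A B : Set ℝ}
    (hF : MonotoneOn F (Icc lo hi)) (hA : A ⊆ Icc lo hi) (hB : B ⊆ Icc lo hi) (hδ : 0 < δ)
    (hAB : ∀ x ∈ A, ∀ y ∈ B, δ ≤ |F x - F y|) : (closure A ∩ closure B).Finite := by
  have hsub : closure A ⊆ Icc lo hi := closure_minimal hA isClosed_Icc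
  refine finite_of_forall_lt_lt_add_le hδ (f := F) (m := F lo) (M := F hi)
    (fun p hp => ?_) fun p hp q hq r hr hpq hqr => ?_
  · have hp' := hsub hp.1
    have hle : lo ≤ hi := hp'.1.trans hp'.2
    exact ⟨hF (left_mem_Icc.2 hle) hp' hp'.1, hF hp' (right_mem_Icc.2 hle) hp'.2⟩
  have hε : 0 < min (q - p) (r - q) := lt_min (sub_pos.2 hpq) (sub_pos.2 hqr)
  obtain ⟨x, hxA, hqx⟩ := Metric.mem_closure_iff.1 hq.1 _ hε
  obtain ⟨y, hyB, hqy⟩ := Metric.mem_closure_iff.1 hq.2 _ hε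
  rw [Real.dist_eq, abs_sub_lt_iff, lt_min_iff, lt_min_iff] at hqx hqy
  have := hF.add_abs_sub_le (hsub hp.1) (hA hxA) (hB hyB) (hsub hr.1)
    (by linarith) (by linarith) (by linarith) (by linarith)
  linarith [hAB x hxA y hyB]

theorem stmt_4_general (a b : ℝ)
    (ℓ₁ φ : ℝ → ℝ)
    (hℓ₁ : MonotoneOn ℓ₁ (Icc (-a) a))
    (hφ : MonotoneOn φ (Icc (-b) b))
    (hφmap : MapsTo φ (Icc (-b) b) (Icc (-a) a))
    (s₁ s₂ : ℝ) (hs : s₁ < s₂) :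
    (closure {x | x ∈ Icc (-b) b ∧ ℓ₁ (φ x) - φ x = s₁} ∩
      closure {x | x ∈ Icc (-b) b ∧ ℓ₁ (φ x) - φ x = s₂}).Finite := by
  have hF : MonotoneOn (fun x => ℓ₁ (φ x) + φ x) (Icc (-b) b) := (hℓ₁.comp hφ hφmap).add hφ
  refine finite_closure_inter_closure_of_monotoneOn hF (fun x hx => hx.1) (fun x hx => hx.1)
    (sub_pos.2 hs) ?_
  rintro x ⟨hx, hx₁⟩ y ⟨hy, hy₂⟩
  rcases le_total x y with hxy | hyx
  · have := hφ hx hy hxy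
    exact le_abs.2 (Or.inr (by linarith))
  · have := hℓ₁ (hφmap hy) (hφmap hx) (hφ hy hx hyx)
    exact le_abs.2 (Or.inl (by linarith))

/-- Lemma A.4 (1): the intersection of the closures of the φ-preimages of two
distinct level sets of g₁(x) = ℓ₁(x) - x is finite. -/
theorem stmt_4 (a b : ℝ) (ha : 0 < a) (hb : 0 < b)
    (ℓ₁ φ : ℝ → ℝ)
    (hℓ₁ : MonotoneOn ℓ₁ (Icc (-a) a))
    (hφ : MonotoneOn φ (Icc (-b) b))
    (hφmap : MapsTo φ (Icc (-b) b) (Icc (-a) a))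
    (s₁ s₂ : ℝ) (hs : s₁ < s₂) :
    (closure {x | x ∈ Icc (-b) b ∧ ℓ₁ (φ x) - φ x = s₁} ∩
      closure {x | x ∈ Icc (-b) b ∧ ℓ₁ (φ x) - φ x = s₂}).Finite :=
  stmt_4_general a b ℓ₁ φ hℓ₁ hφ hφmap s₁ s₂ hs
end

section
/- For every δ > 0 and every ε with 0 < ε < δ/2 the following holds: if β : [0,1] → ℝ² is a C¹ curve, written β = (β₁, β₂), such that β′(t) ≠ 0 for all t ∈ [0,1], β(t) ∈ [0,1] × [−ε,ε] for all t ∈ [0,1], β₁(0) = 0 and β₁(1) = 1, then there exists t̃ ∈ [0,1] such that |β₂′(t̃)| < δ · |β₁′(t̃)|; in particular, at t̃ the tangent direction of β makes an angle less than arctan(δ) with the horizontal direction. -/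
/-!
If the curve were everywhere steep, `δ |β₁'| ≤ |β₂'|`, then regularity would force `β₂' ≠ 0`, so
by continuity `β₂'` has a constant sign and `|β₂'| = ±β₂'`. Integrating `δ β₁' ≤ ±β₂'` over
`[0,1]` gives `δ = δ (β₁(1) - β₁(0)) ≤ |β₂(1) - β₂(0)| ≤ 2ε < δ`.
-/

open Set

theorem IsPreconnected.forall_pos_or_forall_neg {s : Set ℝ} {f : ℝ → ℝ} (hs : IsPreconnected s)
    (hf : ContinuousOn f s) (hne : ∀ x ∈ s, f x ≠ 0) :
    (∀ x ∈ s, 0 < f x) ∨ ∀ x ∈ s, f x < 0 := by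
  by_contra! ⟨⟨a, ha, hfa⟩, b, hb, hfb⟩
  obtain ⟨c, hc, hfc⟩ := hs.intermediate_value ha hb hf ⟨hfa, hfb⟩
  exact hne c hc hfc

theorem sub_le_sub_of_hasDerivWithinAt_Icc_le {f g f' g' : ℝ → ℝ} {a b : ℝ} (hab : a ≤ b)
    (hf : ∀ t ∈ Icc a b, HasDerivWithinAt f (f' t) (Icc a b) t)
    (hg : ∀ t ∈ Icc a b, HasDerivWithinAt g (g' t) (Icc a b) t)
    (hle : ∀ t ∈ Icc a b, f' t ≤ g' t) : f b - f a ≤ g b - g a := by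
  have hmono : MonotoneOn (fun t => g t - f t) (Icc a b) := by
    refine monotoneOn_of_hasDerivWithinAt_nonneg (f' := fun t => g' t - f' t) (convex_Icc a b)
      (fun t ht => ((hg t ht).sub (hf t ht)).continuousWithinAt) (fun t ht => ?_)
      (fun t ht => sub_nonneg.2 (hle t (interior_subset ht)))
    rw [interior_Icc] at ht ⊢
    exact ((hg t (Ioo_subset_Icc_self ht)).sub (hf t (Ioo_subset_Icc_self ht))).mono
      Ioo_subset_Icc_self
  linarith [hmono (left_mem_Icc.2 hab) (right_mem_Icc.2 hab) hab]

theorem sub_le_abs_sub_of_hasDerivWithinAt_Icc_le_abs {f g f' g' : ℝ → ℝ} {a b : ℝ} (hab : a ≤ b)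
    (hf : ∀ t ∈ Icc a b, HasDerivWithinAt f (f' t) (Icc a b) t)
    (hg : ∀ t ∈ Icc a b, HasDerivWithinAt g (g' t) (Icc a b) t)
    (hg'_cont : ContinuousOn g' (Icc a b)) (hg'_ne : ∀ t ∈ Icc a b, g' t ≠ 0)
    (hle : ∀ t ∈ Icc a b, f' t ≤ |g' t|) : f b - f a ≤ |g b - g a| := by
  rcases isPreconnected_Icc.forall_pos_or_forall_neg hg'_cont hg'_ne with hpos | hneg
  · calc f b - f a ≤ g b - g a := sub_le_sub_of_hasDerivWithinAt_Icc_le hab hf hg fun t ht => by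
          simpa only [abs_of_pos (hpos t ht)] using hle t ht
      _ ≤ |g b - g a| := le_abs_self _
  · calc f b - f a ≤ -g b - -g a :=
          sub_le_sub_of_hasDerivWithinAt_Icc_le hab hf (fun t ht => (hg t ht).neg) fun t ht => by
            simpa only [abs_of_neg (hneg t ht)] using hle t ht
      _ ≤ |g b - g a| := by rw [← neg_sub', ← neg_sub]; exact neg_le_abs _

theorem stmt_11_general (δ ε : ℝ) (hδ : 0 < δ) (hεδ : ε < δ / 2)
    (β β' : ℝ → ℝ × ℝ)
    (hderiv : ∀ t ∈ Icc (0:ℝ) 1, HasDerivWithinAt β (β' t) (Icc (0:ℝ) 1) t)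
    (hcont : ContinuousOn β' (Icc (0:ℝ) 1))
    (hreg : ∀ t ∈ Icc (0:ℝ) 1, β' t ≠ 0)
    (hrange : ∀ t ∈ Icc (0:ℝ) 1, (β t).1 ∈ Icc (0:ℝ) 1 ∧ (β t).2 ∈ Icc (-ε) ε)
    (h0 : (β 0).1 = 0) (h1 : (β 1).1 = 1) :
    ∃ t ∈ Icc (0:ℝ) 1, |(β' t).2| < δ * |(β' t).1| := by
  by_contra! hsteep
  have hvert_ne : ∀ t ∈ Icc (0:ℝ) 1, (β' t).2 ≠ 0 := fun t ht hzero => by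
    have h := hsteep t ht
    rw [hzero, abs_zero, ← mul_zero δ] at h
    have hhoriz : (β' t).1 = 0 := abs_nonpos_iff.mp (le_of_mul_le_mul_left h hδ)
    exact hreg t ht (Prod.ext hhoriz hzero)
  have hcross := sub_le_abs_sub_of_hasDerivWithinAt_Icc_le_abs zero_le_one
    (fun t ht => HasDerivWithinAt.const_mul δ (hderiv t ht).fst) (fun t ht => (hderiv t ht).snd)
    hcont.snd hvert_ne fun t ht =>
      (mul_le_mul_of_nonneg_left (le_abs_self _) hδ.le).trans (hsteep t ht)
  have hrise : |(β 1).2 - (β 0).2| ≤ 2 * ε := by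
    obtain ⟨-, h0l, h0u⟩ := hrange 0 (left_mem_Icc.2 zero_le_one)
    obtain ⟨-, h1l, h1u⟩ := hrange 1 (right_mem_Icc.2 zero_le_one)
    rw [abs_sub_le_iff]; constructor <;> linarith
  simp only [h0, h1] at hcross
  linarith

/-- Local-coordinate form of the tubular-neighborhood Lemma 2.14: a regular C¹
curve crossing the strip [0,1] × [-ε,ε] (with 0 < ε < δ/2) from the left side
to the right side must at some point have |β₂'| < δ·|β₁'|, i.e. tangent
direction within angle arctan(δ) of the horizontal. -/
theorem stmt_11 (δ ε : ℝ) (hδ : 0 < δ) (hε : 0 < ε) (hεδ : ε < δ / 2)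
    (β β' : ℝ → ℝ × ℝ)
    (hderiv : ∀ t ∈ Icc (0:ℝ) 1, HasDerivWithinAt β (β' t) (Icc (0:ℝ) 1) t)
    (hcont : ContinuousOn β' (Icc (0:ℝ) 1))
    (hreg : ∀ t ∈ Icc (0:ℝ) 1, β' t ≠ 0)
    (hrange : ∀ t ∈ Icc (0:ℝ) 1, (β t).1 ∈ Icc (0:ℝ) 1 ∧ (β t).2 ∈ Icc (-ε) ε)
    (h0 : (β 0).1 = 0) (h1 : (β 1).1 = 1) :
    ∃ t ∈ Icc (0:ℝ) 1, |(β' t).2| < δ * |(β' t).1| :=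
  stmt_11_general δ ε hδ hεδ β β' hderiv hcont hreg hrange h0 h1
end
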